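/- For ℓ ≥ 2, define A(ℓ) = (11(ℓ-2)/12) + (1/2){ℓ/2}² - (5/6){ℓ/2} + 1/3 + (1/6){ℓ/2}(-{ℓ/2}² + 6{ℓ/2} - 3)_+ and B(ℓ) = ℓ/2 - 2/(3ℓ). Then there exists ℓ₁ ∈ (3.6, 3.61) such that B(ℓ) ≥ A(ℓ) for 2 ≤ ℓ ≤ ℓ₁ and A(ℓ) ≥ B(ℓ) for ℓ ≥ ℓ₁. -/

import Mathlib

/-!
On `[2, 4)` write `ℓ = 2 + 2f` with `f = {ℓ/2}`. Clearing the denominator `3ℓ`, the positive part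
in `A` turns the difference into a minimum:
`6(1 + f)(B - A) = min(-g(f), (1 - f)(3f² + 6f + 2))` with `g(f) = -f⁴ + 8f³ + 6f² - 7f - 2`,
and the second entry is nonnegative, so `B - A` has the sign of `-g(f)`. The quartic `g` has a
root `f₀ ∈ [0.804, 0.8049]`, and `g(f) - g(f₀) = (f - f₀) q(f, f₀)` with `q > 0` on `[0, 1]`, so
`ℓ₁ = 2 + 2f₀` is the crossover. For `ℓ ≥ 4` the slope `11/12 > 1/2` already gives `A ≥ ℓ/2 > B`.
-/

open Real Set

/-- The two competing lower bounds for `ℓ ≥ 2`. -/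
noncomputable def Afun (ℓ : ℝ) : ℝ :=
  11 * (ℓ - 2) / 12 + (1/2) * (Int.fract (ℓ/2)) ^ 2 - (5/6) * Int.fract (ℓ/2)
    + 1/3 + (1/6) * Int.fract (ℓ/2)
        * max (-(Int.fract (ℓ/2)) ^ 2 + 6 * Int.fract (ℓ/2) - 3) 0

noncomputable def Bfun (ℓ : ℝ) : ℝ := ℓ / 2 - 2 / (3 * ℓ)

def crossoverPoly (f : ℝ) : ℝ := -f ^ 4 + 8 * f ^ 3 + 6 * f ^ 2 - 7 * f - 2

lemma crossoverPoly_sub (f f₀ : ℝ) :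
    crossoverPoly f - crossoverPoly f₀ = (f - f₀) *
      (-(f ^ 3 + f ^ 2 * f₀ + f * f₀ ^ 2 + f₀ ^ 3) + 8 * (f ^ 2 + f * f₀ + f₀ ^ 2)
        + 6 * (f + f₀) - 7) := by
  unfold crossoverPoly; ring

lemma crossoverPoly_quotient_pos {f f₀ : ℝ} (hf0 : 0 ≤ f) (hf1 : f ≤ 1)
    (hf₀ : 4 / 5 ≤ f₀) (hf₀1 : f₀ ≤ 1) :
    0 < -(f ^ 3 + f ^ 2 * f₀ + f * f₀ ^ 2 + f₀ ^ 3) + 8 * (f ^ 2 + f * f₀ + f₀ ^ 2)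
        + 6 * (f + f₀) - 7 := by
  have h0 : (0:ℝ) ≤ f₀ := by linarith
  have : f ^ 3 + f ^ 2 * f₀ + f * f₀ ^ 2 + f₀ ^ 3 ≤ 2 * f ^ 2 + f * f₀ + f₀ ^ 2 := by
    have := mul_le_mul_of_nonneg_left hf1 (sq_nonneg f)
    have := mul_le_mul_of_nonneg_left hf₀1 (sq_nonneg f)
    have := mul_le_mul_of_nonneg_left hf₀1 (mul_nonneg hf0 h0)
    have := mul_le_mul_of_nonneg_left hf₀1 (sq_nonneg f₀)
    nlinarith
  nlinarith [mul_nonneg hf0 h0]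

lemma crossoverPoly_nonpos_of_le {f f₀ : ℝ} (hf0 : 0 ≤ f) (hf : f ≤ f₀)
    (hf₀ : 4 / 5 ≤ f₀) (hf₀1 : f₀ ≤ 1) (hroot : crossoverPoly f₀ = 0) :
    crossoverPoly f ≤ 0 := by
  have := crossoverPoly_sub f f₀
  have := crossoverPoly_quotient_pos hf0 (hf.trans hf₀1) hf₀ hf₀1
  nlinarith

lemma crossoverPoly_nonneg_of_ge {f f₀ : ℝ} (hf : f₀ ≤ f) (hf1 : f ≤ 1)
    (hf₀ : 4 / 5 ≤ f₀) (hroot : crossoverPoly f₀ = 0) :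
    0 ≤ crossoverPoly f := by
  have := crossoverPoly_sub f f₀
  have := crossoverPoly_quotient_pos (by linarith) hf1 hf₀ (hf.trans hf1)
  nlinarith

lemma exists_crossoverPoly_root :
    ∃ f₀ ∈ Icc (0.804 : ℝ) 0.8049, crossoverPoly f₀ = 0 := by
  have hcont : ContinuousOn crossoverPoly (Icc (0.804 : ℝ) 0.8049) := by
    unfold crossoverPoly; fun_prop
  exact intermediate_value_Icc (by norm_num) hcont
    ⟨by norm_num [crossoverPoly], by norm_num [crossoverPoly]⟩

lemma six_mul_Bfun_sub_Afun {f : ℝ} (hf0 : 0 ≤ f) (hf1 : f < 1) :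
    6 * (1 + f) * (Bfun (2 + 2 * f) - Afun (2 + 2 * f)) =
      min (-crossoverPoly f) ((1 - f) * (3 * f ^ 2 + 6 * f + 2)) := by
  have hfract : Int.fract ((2 + 2 * f) / 2) = f := by
    rw [Int.fract_eq_iff]
    exact ⟨hf0, hf1, 1, by push_cast; ring⟩
  have hpos : (0:ℝ) < 1 + f := by linarith
  rw [Afun, Bfun, hfract, crossoverPoly]
  rcases le_total (-f ^ 2 + 6 * f - 3) 0 with hh | hh
  · rw [max_eq_right hh, min_eq_right (by nlinarith [mul_nonneg hf0 hpos.le])]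
    field_simp
    ring
  · rw [max_eq_left hh, min_eq_left (by nlinarith [mul_nonneg hf0 hpos.le])]
    field_simp
    ring

lemma Afun_le_Bfun_of_crossoverPoly_nonpos {f : ℝ} (hf0 : 0 ≤ f) (hf1 : f < 1)
    (hg : crossoverPoly f ≤ 0) : Afun (2 + 2 * f) ≤ Bfun (2 + 2 * f) := by
  have h := six_mul_Bfun_sub_Afun hf0 hf1
  have : 0 ≤ min (-crossoverPoly f) ((1 - f) * (3 * f ^ 2 + 6 * f + 2)) :=
    le_min (by linarith) (mul_nonneg (by linarith) (by positivity))
  nlinarith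

lemma Bfun_le_Afun_of_crossoverPoly_nonneg {f : ℝ} (hf0 : 0 ≤ f) (hf1 : f < 1)
    (hg : 0 ≤ crossoverPoly f) : Bfun (2 + 2 * f) ≤ Afun (2 + 2 * f) := by
  have h := six_mul_Bfun_sub_Afun hf0 hf1
  have : min (-crossoverPoly f) ((1 - f) * (3 * f ^ 2 + 6 * f + 2)) ≤ 0 :=
    (min_le_left _ _).trans (by linarith)
  nlinarith

lemma Bfun_le_Afun_of_four_le {ℓ : ℝ} (h4 : 4 ≤ ℓ) : Bfun ℓ ≤ Afun ℓ := by
  set f := Int.fract (ℓ / 2)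
  have hn : (2 : ℝ) ≤ ⌊ℓ / 2⌋ := by
    exact_mod_cast Int.le_floor.2 (by push_cast; linarith)
  have hsplit : ℓ / 2 = ⌊ℓ / 2⌋ + f := (Int.floor_add_fract _).symm
  have hM : 0 ≤ f * max (-f ^ 2 + 6 * f - 3) 0 :=
    mul_nonneg (Int.fract_nonneg _) (le_max_right _ _)
  have hB : Bfun ℓ ≤ ℓ / 2 := by
    rw [Bfun]; linarith [show 0 < 2 / (3 * ℓ) by positivity]
  rw [Afun]
  nlinarith [sq_nonneg f]

/-- There is a crossover point `ℓ₁ ∈ (3.6, 3.61)`: `B ≥ A` on `[2, ℓ₁]` and `A ≥ B` on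
`[ℓ₁, ∞)`. -/
theorem stmt_12 :
    ∃ ℓ₁ ∈ Set.Ioo (3.6 : ℝ) 3.61,
      (∀ ℓ : ℝ, 2 ≤ ℓ → ℓ ≤ ℓ₁ → Afun ℓ ≤ Bfun ℓ) ∧
      (∀ ℓ : ℝ, ℓ₁ ≤ ℓ → Bfun ℓ ≤ Afun ℓ) := by
  obtain ⟨f₀, ⟨hf₀l, hf₀u⟩, hroot⟩ := exists_crossoverPoly_root
  have hf₀ : (4 / 5 : ℝ) ≤ f₀ := by norm_num at hf₀l ⊢; linarith
  refine ⟨2 + 2 * f₀, ⟨by norm_num; linarith, by norm_num; linarith⟩, ?_, ?_⟩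
  · intro ℓ h2 hle
    obtain ⟨f, rfl⟩ : ∃ f, ℓ = 2 + 2 * f := ⟨ℓ / 2 - 1, by ring⟩
    exact Afun_le_Bfun_of_crossoverPoly_nonpos (by linarith) (by linarith)
      (crossoverPoly_nonpos_of_le (by linarith) (by linarith) hf₀
        (by linarith) hroot)
  · intro ℓ hge
    rcases lt_or_ge ℓ 4 with h4 | h4
    · obtain ⟨f, rfl⟩ : ∃ f, ℓ = 2 + 2 * f := ⟨ℓ / 2 - 1, by ring⟩
      exact Bfun_le_Afun_of_crossoverPoly_nonneg (by linarith) (by linarith)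
        (crossoverPoly_nonneg_of_ge (by linarith) (by linarith) hf₀ hroot)
    · exact Bfun_le_Afun_of_four_le h4
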